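/- arXiv:1507.02201 — 6 statements merged into one kernel-verified Lean document; each statement's English description precedes it below -/
import Mathlib

section
/- Let Γ be a subgroup of the Euclidean group E(n). Then Γ acts properly discontinuously on ℝⁿ (for every pair of compact sets K, L ⊆ ℝⁿ, the set of γ ∈ Γ with γ•K ∩ L ≠ ∅ is finite) with compact orbit-space ℝⁿ/Γ if and only if Γ is a discrete uniform subgroup of E(n), i.e., Γ is discrete and the coset space E(n)/Γ with the quotient topology is compact. -/
/-- Application of a matrix to a vector of Euclidean space, `x ↦ Mx`. -/
def EuclideanGrp.mapp {n : ℕ} (M : Matrix (Fin n) (Fin n) ℝ)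
    (x : EuclideanSpace ℝ (Fin n)) : EuclideanSpace ℝ (Fin n) := WithLp.toLp 2 (M.mulVec x)

/-- The Euclidean group `E(n)`: pairs `(A, a)` with `A` an `n × n` real orthogonal
matrix and `a ∈ ℝⁿ`, with group law `(A,a)(B,b) = (AB, Ab + a)`. -/
structure EuclideanGrp (n : ℕ) where
  A : Matrix.orthogonalGroup (Fin n) ℝ
  a : EuclideanSpace ℝ (Fin n)

namespace EuclideanGrp

variable {n : ℕ}

lemma mapp_add (M : Matrix (Fin n) (Fin n) ℝ) (x y : EuclideanSpace ℝ (Fin n)) :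
    mapp M (x + y) = mapp M x + mapp M y := by
  simp [mapp, Matrix.mulVec_add]
lemma mapp_mapp (M N : Matrix (Fin n) (Fin n) ℝ) (x : EuclideanSpace ℝ (Fin n)) :
    mapp M (mapp N x) = mapp (M * N) x := by
  simp [mapp, Matrix.mulVec_mulVec]
lemma mapp_one (x : EuclideanSpace ℝ (Fin n)) : mapp 1 x = x := by simp [mapp]
lemma mapp_zero (M : Matrix (Fin n) (Fin n) ℝ) : mapp M 0 = 0 := by simp [mapp]

@[ext] lemma ext {g h : EuclideanGrp n} (hA : g.A = h.A) (ha : g.a = h.a) : g = h := by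
  cases g; cases h; simp_all

/-- The group law `(A,a)(B,b) = (AB, Ab + a)` on `E(n)`. -/
instance : Group (EuclideanGrp n) where
  mul g h := ⟨g.A * h.A, mapp (g.A : Matrix (Fin n) (Fin n) ℝ) h.a + g.a⟩
  one := ⟨1, 0⟩
  inv g := ⟨g.A⁻¹, -mapp ((g.A⁻¹ : Matrix.orthogonalGroup (Fin n) ℝ) : Matrix (Fin n) (Fin n) ℝ) g.a⟩
  mul_assoc g h k := by
    ext : 1
    · exact mul_assoc _ _ _
    · show mapp (↑(g.A * h.A)) k.a + (mapp (↑g.A) h.a + g.a)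
        = mapp (↑g.A) (mapp (↑h.A) k.a + h.a) + g.a
      simp [mapp_add, mapp_mapp, add_assoc]
  one_mul g := by
    ext : 1
    · exact one_mul _
    · show mapp (↑(1 : Matrix.orthogonalGroup (Fin n) ℝ)) g.a + 0 = g.a
      simp [mapp_one]
  mul_one g := by
    ext : 1
    · exact mul_one _
    · show mapp (↑g.A) 0 + g.a = g.a
      simp [mapp_zero]
  inv_mul_cancel g := by
    ext : 1
    · exact inv_mul_cancel _
    · show mapp (↑(g.A⁻¹)) g.a + -mapp (↑(g.A⁻¹)) g.a = 0
      simp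

/-- `E(n)` is topologized as a subspace of the product of the space of
`n × n` real matrices with `ℝⁿ`. -/
noncomputable instance : TopologicalSpace (EuclideanGrp n) :=
  TopologicalSpace.induced (fun g => ((g.A : Matrix (Fin n) (Fin n) ℝ), g.a)) inferInstance

/-- The action of `E(n)` on `ℝⁿ` given by `(A,a) • x = Ax + a`. -/
instance : MulAction (EuclideanGrp n) (EuclideanSpace ℝ (Fin n)) where
  smul g x := mapp (g.A : Matrix (Fin n) (Fin n) ℝ) x + g.a
  one_smul x := by
    show mapp (↑(1 : Matrix.orthogonalGroup (Fin n) ℝ)) x + 0 = x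
    simp [mapp_one]
  mul_smul g h x := by
    show mapp (↑(g.A * h.A)) x + (mapp (↑g.A) h.a + g.a)
      = mapp (↑g.A) (mapp (↑h.A) x + h.a) + g.a
    simp [mapp_add, mapp_mapp, add_assoc]

end EuclideanGrp

/-!
The orbit map `g ↦ g • 0 = g.a` of `E(n)` on `ℝⁿ` is proper because `O(n)` is compact, and the
action is transitive. For any topological group `G` acting continuously and transitively on a
locally compact Hausdorff space `X` with a proper orbit map `g ↦ g • x₀`, the action is proper, so
a discrete subgroup `Γ` is closed and acts properly discontinuously; conversely the orbit map
pulls a compact neighbourhood of `x₀` back to a neighbourhood of `1` meeting `Γ` in finitely many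
points. Likewise `gΓ ↦ Γ • g⁻¹ • x₀` maps `G ⧸ Γ` continuously onto `X/Γ`, and a compact set of
`X` meeting every `Γ`-orbit pulls back to a compact set of `G` meeting every coset of `Γ`.
-/

open Set Topology Pointwise

lemma IsOpenMap.exists_isCompact_image_eq_univ {X Y : Type*} [TopologicalSpace X]
    [TopologicalSpace Y] [WeaklyLocallyCompactSpace X] [CompactSpace Y] {f : X → Y}
    (hf : IsOpenMap f) (hsurj : f.Surjective) : ∃ K, IsCompact K ∧ f '' K = univ := by
  choose K hK hKx using fun x : X => exists_compact_mem_nhds x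
  obtain ⟨t, ht⟩ := isCompact_univ.elim_finite_subcover (fun x => f '' interior (K x))
    (fun x => hf _ isOpen_interior) fun y _ =>
      let ⟨x, hx⟩ := hsurj y
      mem_iUnion.2 ⟨x, x, mem_interior_iff_mem_nhds.2 (hKx x), hx⟩
  refine ⟨⋃ x ∈ t, K x, t.isCompact_biUnion fun x _ => hK x, eq_univ_of_univ_subset ?_⟩
  rw [image_iUnion₂]
  exact ht.trans <| iUnion₂_mono fun x _ => image_mono interior_subset

namespace Subgroup

variable {G X : Type*} [Group G] [TopologicalSpace G] [IsTopologicalGroup G]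
  [TopologicalSpace X] [MulAction G X] (Γ : Subgroup G)

lemma properlyDiscontinuousSMul_of_properSMul [T2Space G] [T2Space X]
    [WeaklyLocallyCompactSpace X] [ProperSMul G X] [DiscreteTopology Γ] :
    ProperlyDiscontinuousSMul Γ X :=
  properlyDiscontinuousSMul_iff_properSMul.mpr inferInstance

lemma discreteTopology_of_properlyDiscontinuousSMul [T1Space G] [WeaklyLocallyCompactSpace X]
    {x₀ : X} (hx₀ : Continuous fun g : G => g • x₀) [ProperlyDiscontinuousSMul Γ X] :
    DiscreteTopology Γ := by
  obtain ⟨K, hK, hKx₀⟩ := exists_compact_mem_nhds x₀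
  have hnhds : (fun γ : Γ => (γ : G) • x₀) ⁻¹' K ∈ 𝓝 (1 : Γ) :=
    (hx₀.comp continuous_subtype_val).continuousAt.preimage_mem_nhds (by simpa using hKx₀)
  refine discreteTopology_of_isOpen_singleton_one <|
    isOpen_singleton_of_finite_mem_nhds 1 hnhds ?_
  refine (ProperlyDiscontinuousSMul.finite_disjoint_inter_image hK hK).subset fun γ hγ => ?_
  exact ⟨γ • x₀, mem_image_of_mem _ (mem_of_mem_nhds hKx₀), hγ⟩

lemma compactSpace_orbitRel_quotient_of_compactSpace_quotient [CompactSpace (G ⧸ Γ)] {x₀ : X}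
    (hx₀ : Continuous fun g : G => g • x₀) (hsurj : (fun g : G => g • x₀).Surjective) :
    CompactSpace (MulAction.orbitRel.Quotient Γ X) := by
  let f : G → MulAction.orbitRel.Quotient Γ X := fun g => Quotient.mk _ (g⁻¹ • x₀)
  have hf : ∀ a b, (QuotientGroup.leftRel Γ).r a b → f a = f b := by
    intro a b hab
    refine Quotient.sound ⟨⟨a⁻¹ * b, QuotientGroup.leftRel_apply.mp hab⟩, ?_⟩
    simp [Subgroup.smul_def, smul_smul]
  have hfc : Continuous f := continuous_quotient_mk'.comp (hx₀.comp continuous_inv)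
  refine Function.Surjective.compactSpace (hfc.quotient_lift hf) ?_
  intro q
  induction q using Quotient.inductionOn with | h x => ?_
  obtain ⟨g, rfl⟩ := hsurj x
  exact ⟨QuotientGroup.mk g⁻¹, by simp [f]⟩

lemma compactSpace_quotient_of_compactSpace_orbitRel_quotient [WeaklyLocallyCompactSpace X]
    [ContinuousConstSMul Γ X] [CompactSpace (MulAction.orbitRel.Quotient Γ X)] {x₀ : X}
    (hx₀ : IsProperMap fun g : G => g • x₀) : CompactSpace (G ⧸ Γ) := by
  obtain ⟨K, hK, hKX⟩ := IsOpenMap.exists_isCompact_image_eq_univ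
    (isOpenMap_quotient_mk'_mul (Γ := Γ) (T := X)) Quotient.mk_surjective
  suffices QuotientGroup.mk '' ((fun g : G => g • x₀) ⁻¹' K)⁻¹ = (univ : Set (G ⧸ Γ)) from
    isCompact_univ_iff.mp <|
      this ▸ (hx₀.isCompact_preimage hK).inv.image QuotientGroup.continuous_mk
  refine eq_univ_of_forall fun q => ?_
  induction q using QuotientGroup.induction_on with | H g => ?_
  obtain ⟨k, hk, hkg⟩ :=
    hKX.symm.subset (mem_univ (Quotient.mk (MulAction.orbitRel Γ X) (g⁻¹ • x₀)))
  obtain ⟨γ, rfl⟩ := MulAction.orbitRel_apply.mp (Quotient.exact hkg)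
  refine ⟨g * (γ : G)⁻¹, ?_, ?_⟩
  · simpa [Subgroup.smul_def, mul_smul] using hk
  · exact QuotientGroup.eq.mpr (by simp)

theorem properlyDiscontinuousSMul_and_compactSpace_iff [T2Space G] [T2Space X]
    [WeaklyLocallyCompactSpace X] [ContinuousSMul G X] [MulAction.IsPretransitive G X] {x₀ : X}
    (hx₀ : IsProperMap fun g : G => g • x₀) :
    ProperlyDiscontinuousSMul Γ X ∧ CompactSpace (MulAction.orbitRel.Quotient Γ X) ↔
      DiscreteTopology Γ ∧ CompactSpace (G ⧸ Γ) := by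
  have : ProperSMul G X := MulAction.properSMul_of_proper_orbitMap hx₀
  constructor
  · rintro ⟨_, _⟩
    exact ⟨Γ.discreteTopology_of_properlyDiscontinuousSMul hx₀.continuous,
      Γ.compactSpace_quotient_of_compactSpace_orbitRel_quotient hx₀⟩
  · rintro ⟨_, _⟩
    exact ⟨Γ.properlyDiscontinuousSMul_of_properSMul,
      Γ.compactSpace_orbitRel_quotient_of_compactSpace_quotient hx₀.continuous
        (MulAction.surjective_smul G x₀)⟩

end Subgroup

namespace EuclideanGrp

variable {n : ℕ}

def toProd (g : EuclideanGrp n) : Matrix (Fin n) (Fin n) ℝ × EuclideanSpace ℝ (Fin n) :=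
  ((g.A : Matrix (Fin n) (Fin n) ℝ), g.a)

lemma isEmbedding_toProd : IsEmbedding (toProd (n := n)) :=
  ⟨⟨rfl⟩, fun _ _ hgh => EuclideanGrp.ext (Subtype.ext congr($hgh.1)) congr($hgh.2)⟩

instance : T2Space (EuclideanGrp n) := isEmbedding_toProd.t2Space

@[fun_prop]
lemma continuous_A : Continuous (A (n := n)) :=
  continuous_induced_rng.2 <| continuous_fst.comp isEmbedding_toProd.continuous

@[fun_prop]
lemma continuous_a : Continuous fun g : EuclideanGrp n => g.a :=
  continuous_snd.comp isEmbedding_toProd.continuous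

@[fun_prop]
lemma _root_.Continuous.mapp {X : Type*} [TopologicalSpace X] {M : X → Matrix (Fin n) (Fin n) ℝ}
    {v : X → EuclideanSpace ℝ (Fin n)} (hM : Continuous M) (hv : Continuous v) :
    Continuous fun x => mapp (M x) (v x) :=
  PiLp.continuous_toLp 2 _ |>.comp <| hM.matrix_mulVec <| PiLp.continuous_ofLp 2 _ |>.comp hv

lemma mul_A (g h : EuclideanGrp n) :
    ((g * h).A : Matrix (Fin n) (Fin n) ℝ) = g.A * h.A := rfl

lemma mul_a (g h : EuclideanGrp n) :
    (g * h).a = mapp (g.A : Matrix (Fin n) (Fin n) ℝ) h.a + g.a := rfl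

lemma inv_A (g : EuclideanGrp n) :
    (g⁻¹.A : Matrix (Fin n) (Fin n) ℝ) = star (g.A : Matrix (Fin n) (Fin n) ℝ) := rfl

lemma inv_a (g : EuclideanGrp n) :
    g⁻¹.a = -mapp (star (g.A : Matrix (Fin n) (Fin n) ℝ)) g.a := rfl

lemma smul_def (g : EuclideanGrp n) (x : EuclideanSpace ℝ (Fin n)) :
    g • x = mapp (g.A : Matrix (Fin n) (Fin n) ℝ) x + g.a := rfl

instance : IsTopologicalGroup (EuclideanGrp n) where
  continuous_mul := by
    simp only [isEmbedding_toProd.continuous_iff, Function.comp_def, toProd, mul_A, mul_a]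
    fun_prop
  continuous_inv := by
    simp only [isEmbedding_toProd.continuous_iff, Function.comp_def, toProd, inv_A, inv_a]
    fun_prop

instance : ContinuousSMul (EuclideanGrp n) (EuclideanSpace ℝ (Fin n)) where
  continuous_smul := by simp only [smul_def]; fun_prop

instance : MulAction.IsPretransitive (EuclideanGrp n) (EuclideanSpace ℝ (Fin n)) where
  exists_smul_eq x y := ⟨⟨1, y - x⟩, by simp [smul_def, mapp_one]⟩

lemma isCompact_orthogonalGroup :
    IsCompact (Matrix.orthogonalGroup (Fin n) ℝ : Set (Matrix (Fin n) (Fin n) ℝ)) := by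
  refine (isCompact_univ_pi fun _ => isCompact_univ_pi fun _ => isCompact_Icc (a := -1) (b := 1))
    |>.of_isClosed_subset (isClosed_unitary (R := Matrix (Fin n) (Fin n) ℝ))
      fun M hM i _ j _ => abs_le.mp (entry_norm_bound_of_unitary hM i j)

lemma isProperMap_smul_zero :
    IsProperMap fun g : EuclideanGrp n => g • (0 : EuclideanSpace ℝ (Fin n)) := by
  refine isProperMap_iff_isCompact_preimage.mpr
    ⟨continuous_id.smul continuous_const, fun K hK => ?_⟩
  rw [isEmbedding_toProd.isCompact_iff]
  convert isCompact_orthogonalGroup.prod hK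
  ext ⟨M, v⟩
  simp only [mem_image, mem_preimage, smul_def, mapp_zero, zero_add, toProd, Prod.mk.injEq,
    mem_prod, SetLike.mem_coe]
  constructor
  · rintro ⟨g, hg, rfl, rfl⟩
    exact ⟨g.A.2, hg⟩
  · rintro ⟨hM, hv⟩
    exact ⟨⟨⟨M, hM⟩, v⟩, hv, rfl, rfl⟩

end EuclideanGrp

/-- A subgroup `Γ` of the Euclidean group `E(n)` acts properly
discontinuously on `ℝⁿ` with compact orbit space `ℝⁿ/Γ` if and only if `Γ` is a
discrete uniform subgroup of `E(n)` (discrete, with compact coset space `E(n)/Γ`). -/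
theorem properlyDiscontinuous_compactQuotient_iff_discrete_uniform
    (n : ℕ) (Γ : Subgroup (EuclideanGrp n)) :
    ((∀ K L : Set (EuclideanSpace ℝ (Fin n)), IsCompact K → IsCompact L →
        {γ : EuclideanGrp n | γ ∈ Γ ∧ ((fun x => γ • x) '' K ∩ L).Nonempty}.Finite) ∧
      CompactSpace (Quotient (MulAction.orbitRel Γ (EuclideanSpace ℝ (Fin n)))))
      ↔ (DiscreteTopology Γ ∧ CompactSpace (EuclideanGrp n ⧸ Γ)) :=
  (Iff.and Γ.properlyDiscontinuousSMul_iff.symm Iff.rfl).trans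
    (Γ.properlyDiscontinuousSMul_and_compactSpace_iff EuclideanGrp.isProperMap_smul_zero)
end

section
/- For every t > 0 and every x, x₀ ∈ ℝⁿ the series ρ_t^{x₀}(x) = (1/V) Σ_{k∈ℤⁿ} exp(i K(k)·(x − x₀) − ‖K(k)‖² t/2) converges absolutely, and the resulting function satisfies the heat equation ∂ρ_t^{x₀}(x)/∂t = (1/2) Δρ_t^{x₀}(x), where Δ is the Laplacian in the variable x. -/
/-!
Pairing `K k` with the basis vector `bᵢ` recovers `2π kᵢ`, so by Cauchy–Schwarz `|k|² ≲ ‖K k‖²` and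
`∑ₖ exp (-a ‖K k‖²)` is dominated by a product of one-dimensional Gaussian sums over `ℤ`. The
termwise `t`- and `x`-derivatives only add polynomial factors `‖K k‖²`, `⟪K k, v⟫`, which the
Gaussian absorbs uniformly for `t` bounded away from `0`, so differentiation commutes with
summation. Each term `exp (i⟪ξ, y⟫ - ‖ξ‖² t / 2)` solves the heat equation: `∂ₜ` multiplies it by
`-‖ξ‖² / 2` and `∑ᵢ ∂ᵢ²` by `-∑ᵢ ⟪ξ, eᵢ⟫² = -‖ξ‖²` (Parseval).
-/

open Real
open scoped InnerProductSpace Complex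

lemma summable_exp_neg_mul_sq_int {a : ℝ} (ha : 0 < a) :
    Summable fun m : ℤ => rexp (-a * (m : ℝ) ^ 2) := by
  have hnat : Summable fun m : ℕ => rexp (-a * (m : ℝ) ^ 2) :=
    summable_exp_nat_mul_of_ge (neg_neg_of_pos ha) fun m => by
      exact_mod_cast Nat.le_self_pow two_ne_zero m
  exact .of_nat_of_neg (by simpa using hnat) (by simpa using hnat)

lemma summable_fin_pi_prod_of_nonneg {α : Type*} {f : α → ℝ} (hf₀ : 0 ≤ f) (hf : Summable f) :
    ∀ n : ℕ, Summable fun k : Fin n → α => ∏ i, f (k i)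
  | 0 => .of_finite
  | n + 1 => by
    rw [← (Fin.consEquiv fun _ => α).summable_iff]
    simpa [Function.comp_def, Fin.prod_univ_succ] using
      hf.mul_of_nonneg (summable_fin_pi_prod_of_nonneg hf₀ hf n) hf₀
        fun k => Finset.prod_nonneg fun i _ => hf₀ (k i)

lemma summable_pi_prod_of_nonneg {α ι : Type*} [Fintype ι] {f : α → ℝ} (hf₀ : 0 ≤ f)
    (hf : Summable f) : Summable fun k : ι → α => ∏ i, f (k i) := by
  let e := Fintype.equivFin ι
  rw [← (e.arrowCongr (Equiv.refl α)).symm.summable_iff]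
  simpa [Function.comp_def, Equiv.arrowCongr, ← e.prod_comp] using
    summable_fin_pi_prod_of_nonneg hf₀ hf (Fintype.card ι)

def GaussianSummable {ι : Type*} (r : ι → ℝ) : Prop :=
  ∀ a > 0, Summable fun k => rexp (-a * r k ^ 2)

section DualFamily

variable {E ι : Type*} [NormedAddCommGroup E] [InnerProductSpace ℝ E] [Fintype ι] [DecidableEq ι]
  {b bstar : ι → E}

lemma inner_sum_smul_of_dual (hdual : ∀ i j, ⟪b i, bstar j⟫_ℝ = if i = j then 1 else 0)
    (c : ι → ℝ) (i : ι) : ⟪b i, ∑ j, c j • bstar j⟫_ℝ = c i := by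
  simp [inner_sum, real_inner_smul_right, hdual]

lemma sum_sq_le_mul_norm_sq_of_dual (hdual : ∀ i j, ⟪b i, bstar j⟫_ℝ = if i = j then 1 else 0)
    (c : ι → ℝ) : ∑ i, c i ^ 2 ≤ (∑ i, ‖b i‖ ^ 2) * ‖∑ j, c j • bstar j‖ ^ 2 := by
  rw [Finset.sum_mul]
  refine Finset.sum_le_sum fun i _ => ?_
  rw [← inner_sum_smul_of_dual hdual c i, ← mul_pow]
  exact sq_le_sq.mpr ((abs_real_inner_le_norm _ _).trans (le_abs_self _))

lemma gaussianSummable_norm_sum_smul_of_dual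
    (hdual : ∀ i j, ⟪b i, bstar j⟫_ℝ = if i = j then 1 else 0) :
    GaussianSummable fun k : ι → ℤ => ‖∑ i, (k i : ℝ) • bstar i‖ := by
  intro a ha
  set C := ∑ i, ‖b i‖ ^ 2 + 1
  have hC : 0 < C := by positivity
  refine (summable_pi_prod_of_nonneg (fun _ => (exp_pos _).le)
    (summable_exp_neg_mul_sq_int (div_pos ha hC))).of_nonneg_of_le (fun _ => (exp_pos _).le)
    fun k => ?_
  set v := ∑ i, (k i : ℝ) • bstar i
  have hk : ∑ i, (k i : ℝ) ^ 2 ≤ C * ‖v‖ ^ 2 :=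
    (sum_sq_le_mul_norm_sq_of_dual hdual _).trans (by gcongr; linarith)
  rw [← Real.exp_sum, ← Finset.mul_sum, exp_le_exp]
  calc -a * ‖v‖ ^ 2 = -(a / C) * (C * ‖v‖ ^ 2) := by field_simp
    _ ≤ -(a / C) * ∑ i, (k i : ℝ) ^ 2 :=
      mul_le_mul_of_nonpos_left hk (neg_nonpos.mpr (div_pos ha hC).le)

end DualFamily

lemma sq_mul_exp_neg_mul_sq_le {a : ℝ} (ha : 0 < a) (r : ℝ) :
    r ^ 2 * rexp (-a * r ^ 2) ≤ 2 / a * rexp (-(a / 2) * r ^ 2) := by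
  have hlin : a / 2 * r ^ 2 ≤ rexp (a / 2 * r ^ 2) :=
    (le_add_of_nonneg_right zero_le_one).trans (add_one_le_exp _)
  have hsplit : rexp (-a * r ^ 2) = rexp (-(a / 2) * r ^ 2) / rexp (a / 2 * r ^ 2) := by
    rw [← exp_sub]; ring_nf
  rw [hsplit, mul_div_assoc', div_le_iff₀ (exp_pos _)]
  calc r ^ 2 * rexp (-(a / 2) * r ^ 2) = 2 / a * (a / 2 * r ^ 2) * rexp (-(a / 2) * r ^ 2) := by
        field_simp
    _ ≤ 2 / a * rexp (a / 2 * r ^ 2) * rexp (-(a / 2) * r ^ 2) := by gcongr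
    _ = 2 / a * rexp (-(a / 2) * r ^ 2) * rexp (a / 2 * r ^ 2) := by ring

section GaussianMoments

variable {ι : Type*} {r : ι → ℝ}

lemma summable_sq_mul_exp_neg_mul_sq (h : GaussianSummable r)
    {a : ℝ} (ha : 0 < a) : Summable fun k => r k ^ 2 * rexp (-a * r k ^ 2) :=
  ((h (a / 2) (by positivity)).mul_left (2 / a)).of_nonneg_of_le (fun _ => by positivity)
    fun k => sq_mul_exp_neg_mul_sq_le ha (r k)

lemma summable_abs_mul_exp_neg_mul_sq (h : GaussianSummable r)
    {a : ℝ} (ha : 0 < a) : Summable fun k => |r k| * rexp (-a * r k ^ 2) :=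
  ((h a ha).add (summable_sq_mul_exp_neg_mul_sq h ha)).of_nonneg_of_le (fun _ => by positivity)
    fun k => by
      rw [← one_add_mul]
      gcongr
      nlinarith [sq_abs (r k), sq_nonneg (|r k| - 1)]

end GaussianMoments

lemma hasDerivAt_mul_cexp_mul (c w : ℂ) (s : ℝ) :
    HasDerivAt (fun s : ℝ => c * cexp (w * s)) (c * w * cexp (w * s)) s := by
  have h := ((hasDerivAt_id s).ofReal_comp.const_mul w).cexp.const_mul c
  simp only [id, Complex.ofReal_one, mul_one] at h
  exact h.congr_deriv (by ring)

lemma hasDerivAt_tsum_mul_cexp_mul {ι : Type*} {c w : ι → ℂ} {u : ι → ℝ} {U : Set ℝ}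
    (hU : IsOpen U) (hU' : IsPreconnected U) (hu : Summable u)
    (hbound : ∀ k, ∀ s ∈ U, ‖c k * w k * cexp (w k * s)‖ ≤ u k) {s₀ : ℝ} (hs₀ : s₀ ∈ U)
    (hs₀sum : Summable fun k => c k * cexp (w k * s₀)) {s : ℝ} (hs : s ∈ U) :
    HasDerivAt (fun s : ℝ => ∑' k, c k * cexp (w k * s)) (∑' k, c k * w k * cexp (w k * s)) s :=
  hasDerivAt_tsum_of_isPreconnected hu hU hU' (fun _ s _ => hasDerivAt_mul_cexp_mul _ _ s)
    hbound hs₀ hs₀sum hs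

section HeatTerm

variable {E : Type*} [NormedAddCommGroup E] [InnerProductSpace ℝ E]

noncomputable def heatTerm (ξ : E) (t : ℝ) (y : E) : ℂ :=
  cexp (Complex.I * ((⟪ξ, y⟫_ℝ : ℝ) : ℂ) - ((‖ξ‖ ^ 2 * t / 2 : ℝ) : ℂ))

lemma norm_heatTerm (ξ : E) (t : ℝ) (y : E) : ‖heatTerm ξ t y‖ = rexp (-(t / 2) * ‖ξ‖ ^ 2) := by
  rw [heatTerm, Complex.norm_exp]
  congr 1
  simp only [Complex.sub_re, Complex.mul_re, Complex.I_re, Complex.I_im, Complex.ofReal_re,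
    Complex.ofReal_im]
  ring

lemma heatTerm_eq_mul_cexp_mul (ξ : E) (t : ℝ) (y : E) :
    heatTerm ξ t y =
      cexp (Complex.I * ((⟪ξ, y⟫_ℝ : ℝ) : ℂ)) * cexp (((-(‖ξ‖ ^ 2 / 2) : ℝ) : ℂ) * t) := by
  rw [heatTerm, ← Complex.exp_add]
  congr 1
  push_cast
  ring

lemma heatTerm_add_smul (ξ : E) (t : ℝ) (y v : E) (r : ℝ) :
    heatTerm ξ t (y + r • v) = heatTerm ξ t y * cexp (Complex.I * ((⟪ξ, v⟫_ℝ : ℝ) : ℂ) * r) := by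
  rw [heatTerm, heatTerm, ← Complex.exp_add, inner_add_right, real_inner_smul_right]
  congr 1
  push_cast
  ring

end HeatTerm

section HeatSeries

variable {E ι : Type*} [NormedAddCommGroup E] [InnerProductSpace ℝ E] {ξ : ι → E} {t : ℝ}

lemma summable_norm_heatTerm (hξ : GaussianSummable (‖ξ ·‖))
    (ht : 0 < t) (y : E) : Summable fun k => ‖heatTerm (ξ k) t y‖ := by
  simpa only [norm_heatTerm] using hξ (t / 2) (by positivity)

lemma summable_mul_heatTerm (hξ : GaussianSummable (‖ξ ·‖))
    (ht : 0 < t) (y : E) {g : ι → ℂ} {C : ℝ} (hg : ∀ k, ‖g k‖ ≤ C * ‖ξ k‖ ^ 2) :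
    Summable fun k => g k * heatTerm (ξ k) t y :=
  .of_norm_bounded ((summable_sq_mul_exp_neg_mul_sq hξ (half_pos ht)).mul_left C) fun k => by
    rw [norm_mul, norm_heatTerm, ← mul_assoc]
    gcongr
    exact hg k

lemma hasDerivAt_tsum_heatTerm_time (hξ : GaussianSummable (‖ξ ·‖))
    (ht : 0 < t) (y : E) :
    HasDerivAt (fun s => ∑' k, heatTerm (ξ k) s y)
      (∑' k, -((‖ξ k‖ ^ 2 / 2 : ℝ) : ℂ) * heatTerm (ξ k) t y) t := by
  set c : ι → ℂ := fun k => cexp (Complex.I * ((⟪ξ k, y⟫_ℝ : ℝ) : ℂ))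
  set w : ι → ℂ := fun k => ((-(‖ξ k‖ ^ 2 / 2) : ℝ) : ℂ)
  have hcw : ∀ k (s : ℝ), heatTerm (ξ k) s y = c k * cexp (w k * s) :=
    fun k s => heatTerm_eq_mul_cexp_mul (ξ k) s y
  have hbound : ∀ k, ∀ s ∈ Set.Ioi (t / 2),
      ‖c k * w k * cexp (w k * s)‖ ≤ ‖ξ k‖ ^ 2 * rexp (-(t / 4) * ‖ξ k‖ ^ 2) / 2 := by
    intro k s hs
    rw [norm_mul, norm_mul, Complex.norm_exp_I_mul_ofReal, one_mul, ← Complex.ofReal_mul,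
      Complex.norm_exp_ofReal, Complex.norm_real, norm_neg, Real.norm_of_nonneg (by positivity),
      div_mul_eq_mul_div]
    gcongr _ * rexp ?_ / _
    nlinarith [Set.mem_Ioi.mp hs, sq_nonneg ‖ξ k‖]
  have ht₂ : t ∈ Set.Ioi (t / 2) := half_lt_self ht
  have hderiv := hasDerivAt_tsum_mul_cexp_mul isOpen_Ioi isPreconnected_Ioi
    ((summable_sq_mul_exp_neg_mul_sq hξ (by positivity : 0 < t / 4)).div_const 2) hbound ht₂
    (by simpa only [hcw] using (summable_norm_heatTerm hξ ht y).of_norm) ht₂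
  simp only [hcw]
  refine hderiv.congr_deriv (tsum_congr fun k => ?_)
  simp only [w]
  push_cast
  ring

lemma deriv_deriv_tsum_heatTerm_line (hξ : GaussianSummable (‖ξ ·‖))
    (ht : 0 < t) (y v : E) :
    deriv (deriv fun r : ℝ => ∑' k, heatTerm (ξ k) t (y + r • v)) 0
      = ∑' k, -((⟪ξ k, v⟫_ℝ ^ 2 : ℝ) : ℂ) * heatTerm (ξ k) t y := by
  set c : ι → ℂ := fun k => heatTerm (ξ k) t y
  set w : ι → ℂ := fun k => Complex.I * ((⟪ξ k, v⟫_ℝ : ℝ) : ℂ)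
  have hexp : ∀ k (s : ℝ), ‖cexp (w k * s)‖ = 1 := fun k s => by
    rw [mul_assoc, ← Complex.ofReal_mul]
    exact Complex.norm_exp_I_mul_ofReal _
  have hw : ∀ k, ‖w k‖ ≤ ‖v‖ * ‖ξ k‖ := fun k => by
    rw [norm_mul, Complex.norm_I, one_mul, Complex.norm_real, Real.norm_eq_abs, mul_comm]
    exact abs_real_inner_le_norm _ _
  have hbound₁ : ∀ k (s : ℝ), ‖c k * w k * cexp (w k * s)‖
      ≤ ‖v‖ * (|‖ξ k‖| * rexp (-(t / 2) * ‖ξ k‖ ^ 2)) := fun k s => by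
    rw [norm_mul, norm_mul, hexp, mul_one, norm_heatTerm, abs_norm]
    nlinarith [hw k, exp_pos (-(t / 2) * ‖ξ k‖ ^ 2)]
  have hbound₂ : ∀ k (s : ℝ), ‖c k * w k * w k * cexp (w k * s)‖
      ≤ ‖v‖ ^ 2 * (‖ξ k‖ ^ 2 * rexp (-(t / 2) * ‖ξ k‖ ^ 2)) := fun k s => by
    rw [norm_mul, norm_mul, norm_mul, hexp, mul_one, norm_heatTerm]
    have := mul_le_mul (hw k) (hw k) (norm_nonneg _) (by positivity)
    nlinarith [exp_pos (-(t / 2) * ‖ξ k‖ ^ 2)]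
  have hu₁ := (summable_abs_mul_exp_neg_mul_sq hξ (half_pos ht)).mul_left ‖v‖
  have hu₂ := (summable_sq_mul_exp_neg_mul_sq hξ (half_pos ht)).mul_left (‖v‖ ^ 2)
  have hfirst : deriv (fun r : ℝ => ∑' k, heatTerm (ξ k) t (y + r • v))
      = fun r : ℝ => ∑' k, c k * w k * cexp (w k * r) := by
    funext r
    simp only [heatTerm_add_smul]
    exact (hasDerivAt_tsum_mul_cexp_mul isOpen_univ isPreconnected_univ hu₁
      (fun k s _ => hbound₁ k s) (Set.mem_univ 0)
      (by simpa using (summable_norm_heatTerm hξ ht y).of_norm) (Set.mem_univ r)).deriv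
  rw [hfirst, (hasDerivAt_tsum_mul_cexp_mul isOpen_univ isPreconnected_univ hu₂
    (fun k s _ => hbound₂ k s) (Set.mem_univ 0) (.of_norm_bounded hu₁ fun k => hbound₁ k 0)
    (Set.mem_univ 0)).deriv]
  refine tsum_congr fun k => ?_
  simp only [w, c, Complex.ofReal_zero, mul_zero, Complex.exp_zero, mul_one]
  push_cast
  linear_combination (heatTerm (ξ k) t y * ((⟪ξ k, v⟫_ℝ : ℝ) : ℂ) ^ 2) * Complex.I_sq

theorem deriv_tsum_heatTerm_eq_half_laplacian
    (hξ : GaussianSummable (‖ξ ·‖)) (ht : 0 < t) {ι' : Type*} [Fintype ι']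
    (b : OrthonormalBasis ι' ℝ E) (y : E) :
    deriv (fun s => ∑' k, heatTerm (ξ k) s y) t
      = 1 / 2 * ∑ i, deriv (deriv fun r : ℝ => ∑' k, heatTerm (ξ k) t (y + r • b i)) 0 := by
  have hsum : ∀ i ∈ Finset.univ,
      Summable fun k => -((⟪ξ k, b i⟫_ℝ ^ 2 : ℝ) : ℂ) * heatTerm (ξ k) t y := fun i _ =>
    summable_mul_heatTerm hξ ht y (C := 1) fun k => by
      rw [norm_neg, Complex.norm_real, Real.norm_of_nonneg (sq_nonneg _), one_mul, sq_le_sq,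
        abs_norm]
      simpa using abs_real_inner_le_norm (ξ k) (b i)
  simp only [(hasDerivAt_tsum_heatTerm_time hξ ht y).deriv, deriv_deriv_tsum_heatTerm_line hξ ht,
    ← Summable.tsum_finsetSum hsum, ← tsum_mul_left]
  refine tsum_congr fun k => ?_
  have hparseval : ∑ i, ⟪ξ k, b i⟫_ℝ ^ 2 = ‖ξ k‖ ^ 2 := by
    simpa [real_inner_comm] using b.sum_sq_norm_inner_right (ξ k)
  rw [← Finset.sum_mul, Finset.sum_neg_distrib, ← Complex.ofReal_sum, hparseval]
  push_cast
  ring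

end HeatSeries

/-- For a basis `b = B` of `ℝⁿ` with dual basis `b* = Bstar`
(`⟨bᵢ, bⱼ*⟩ = δᵢⱼ`), reciprocal lattice vectors `K(k) = 2π Σᵢ kᵢ bᵢ*` and cell volume
`V = |det(b₁,…,bₙ)|`, the series `ρ_t^{x₀}(x) = (1/V) Σ_{k∈ℤⁿ} exp(i K(k)·(x−x₀) − ‖K(k)‖²t/2)`
converges absolutely for every `t > 0`, and the resulting function satisfies the heat
equation `∂ρ/∂t = (1/2) Δρ` in the variable `x`. -/
theorem lattice_heatKernel_summable_and_heatEquation (n : ℕ)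
    (B : Module.Basis (Fin n) ℝ (EuclideanSpace ℝ (Fin n)))
    (Bstar : Fin n → EuclideanSpace ℝ (Fin n))
    (hdual : ∀ i j, (inner ℝ (B i) (Bstar j) : ℝ) = if i = j then 1 else 0)
    (x₀ : EuclideanSpace ℝ (Fin n)) :
    let K : (Fin n → ℤ) → EuclideanSpace ℝ (Fin n) :=
      fun k => (2 * π) • ∑ i, (k i : ℝ) • Bstar i
    let V : ℝ := |(Matrix.of fun i j => B j i).det|
    let ρ : ℝ → EuclideanSpace ℝ (Fin n) → ℂ := fun t x =>
      (1 / (V : ℂ)) * ∑' k : Fin n → ℤ,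
        Complex.exp (Complex.I * ((inner ℝ (K k) (x - x₀) : ℝ) : ℂ) - ((‖K k‖ ^ 2 * t / 2 : ℝ) : ℂ))
    ∀ t > 0, ∀ x : EuclideanSpace ℝ (Fin n),
      (Summable fun k : Fin n → ℤ =>
        ‖Complex.exp (Complex.I * ((inner ℝ (K k) (x - x₀) : ℝ) : ℂ) - ((‖K k‖ ^ 2 * t / 2 : ℝ) : ℂ))‖) ∧
      deriv (fun s : ℝ => ρ s x) t
        = (1 / 2) * ∑ i : Fin n,
            deriv (deriv (fun r : ℝ => ρ t (x + r • EuclideanSpace.single i (1 : ℝ)))) 0 := by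
  intro K V ρ t ht x
  have hK : GaussianSummable (‖K ·‖) := fun a ha => by
    refine (gaussianSummable_norm_sum_smul_of_dual hdual (a * (2 * π) ^ 2)
      (by positivity)).congr fun k => ?_
    dsimp only [K]
    rw [norm_smul, Real.norm_of_nonneg two_pi_pos.le]
    ring_nf
  refine ⟨summable_norm_heatTerm hK ht (x - x₀), ?_⟩
  have hρ : ∀ (s r : ℝ) i, ρ s (x + r • EuclideanSpace.single i (1 : ℝ)) = 1 / (V : ℂ) *
      ∑' k, heatTerm (K k) s (x - x₀ + r • EuclideanSpace.basisFun (Fin n) ℝ i) := by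
    intro s r i
    rw [EuclideanSpace.basisFun_apply, ← add_sub_right_comm]
    rfl
  simp only [hρ]
  show deriv (fun s => 1 / (V : ℂ) * ∑' k, heatTerm (K k) s (x - x₀)) t = _
  simp only [deriv_const_mul_field']
  rw [deriv_tsum_heatTerm_eq_half_laplacian hK ht (EuclideanSpace.basisFun (Fin n) ℝ),
    ← Finset.mul_sum]
  ring
end

section
/- Let (c_m)_{m∈ℤ} and (d_n)_{n∈ℤ} be absolutely summable families of complex numbers, and let f(θ) = Σ_{m∈ℤ} c_m e^{imθ} and g(θ) = Σ_{n∈ℤ} d_n e^{inθ}. Then for every t > 0 and θ₀ ∈ ℝ, ∫_{−π}^{π} conj(f(θ)) g(θ) ρ_t^{θ₀}(θ) dθ = Σ_{k∈ℤ} ( Σ_{j∈ℤ} conj(c_j) d_{j−k} ) e^{−ikθ₀ − k²t/2}, where ρ_t^{θ₀}(θ) = (1/2π) Σ_{k∈ℤ} e^{ik(θ−θ₀) − k²t/2} is the heat kernel on the circle. -/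
/-!
Expand `conj f`, `g` and the heat kernel as absolutely convergent trigonometric series: their
product is then one absolutely convergent series over `(j, n, k) ∈ ℤ³`, with frequency
`n - j + k`. Integrating term by term (dominated convergence), orthogonality of the characters
`e^{imθ}` on `[-π, π]` keeps exactly the terms with `n = j - k`, each multiplied by `2π`.
-/

open Real Complex

/-- The frequencies are a map `ν` on an arbitrary index type, so that conjugates and products of
such series are again of this form, indexed by products of the index types. -/
noncomputable def trigSeries {ι : Type*} (a : ι → ℂ) (ν : ι → ℤ) (θ : ℝ) : ℂ :=
  ∑' i, a i * cexp (I * (ν i : ℂ) * θ)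

lemma norm_mul_exp_I_intCast_mul (z : ℂ) (n : ℤ) (θ : ℝ) :
    ‖z * cexp (I * (n : ℂ) * θ)‖ = ‖z‖ := by
  rw [norm_mul, show I * (n : ℂ) * θ = ((n * θ : ℝ) : ℂ) * I by push_cast; ring,
    norm_exp_ofReal_mul_I, mul_one]

lemma integral_exp_I_intCast_mul (m : ℤ) :
    ∫ θ in (-π)..π, cexp (I * (m : ℂ) * θ) = if m = 0 then 2 * (π : ℂ) else 0 := by
  split_ifs with hm
  · simp only [hm, Int.cast_zero, mul_zero, zero_mul, Complex.exp_zero,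
      intervalIntegral.integral_const, sub_neg_eq_add, real_smul, ofReal_add, mul_one]
    ring
  · have hc : I * (m : ℂ) ≠ 0 := by simp [hm]
    rw [integral_exp_mul_complex hc, sub_eq_zero.mpr, zero_div]
    rw [show I * m * ((π : ℝ) : ℂ) = I * m * ((-π : ℝ) : ℂ) + m * (2 * π * I) by
      push_cast; ring, Complex.exp_add, exp_int_mul_two_pi_mul_I, mul_one]

section trigSeries

variable {ι κ : Type*} {a : ι → ℂ} {b : κ → ℂ}

lemma summable_norm_mul_exp_I (ha : Summable fun i => ‖a i‖) (ν : ι → ℤ) (θ : ℝ) :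
    Summable fun i => ‖a i * cexp (I * (ν i : ℂ) * θ)‖ := by
  simpa only [norm_mul_exp_I_intCast_mul] using ha

lemma conj_trigSeries (ν : ι → ℤ) (θ : ℝ) :
    starRingEnd ℂ (trigSeries a ν θ) =
      trigSeries (fun i => starRingEnd ℂ (a i)) (fun i => -ν i) θ := by
  rw [trigSeries, trigSeries, starRingEnd_apply, tsum_star]
  refine tsum_congr fun i => ?_
  rw [star_mul', ← starRingEnd_apply, ← starRingEnd_apply, ← Complex.exp_conj]
  simp only [map_mul, conj_I, map_intCast, conj_ofReal, Int.cast_neg]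
  ring_nf

lemma trigSeries_mul (ha : Summable fun i => ‖a i‖) (hb : Summable fun k => ‖b k‖)
    (μ : ι → ℤ) (ν : κ → ℤ) (θ : ℝ) :
    trigSeries a μ θ * trigSeries b ν θ =
      trigSeries (fun p : ι × κ => a p.1 * b p.2) (fun p => μ p.1 + ν p.2) θ := by
  rw [trigSeries, trigSeries, tsum_mul_tsum_of_summable_norm (summable_norm_mul_exp_I ha μ θ)
    (summable_norm_mul_exp_I hb ν θ)]
  refine tsum_congr fun p => ?_
  rw [Int.cast_add, mul_add, add_mul, Complex.exp_add]
  ring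

lemma hasSum_integral_trigSeries [Countable ι] (ha : Summable fun i => ‖a i‖) (ν : ι → ℤ) :
    HasSum (fun i => if ν i = 0 then 2 * π * a i else 0) (∫ θ in (-π)..π, trigSeries a ν θ) := by
  have h := intervalIntegral.hasSum_integral_of_dominated_convergence
    (μ := MeasureTheory.volume) (a := -π) (b := π) (fun i _ => ‖a i‖)
    (fun i => (by fun_prop : Continuous fun θ : ℝ => a i * cexp (I * (ν i : ℂ) * θ))
      |>.aestronglyMeasurable)
    (fun i => .of_forall fun θ _ => (norm_mul_exp_I_intCast_mul _ _ _).le)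
    (.of_forall fun _ _ => ha) intervalIntegrable_const
    (.of_forall fun θ _ => (summable_norm_mul_exp_I ha ν θ).of_norm.hasSum)
  refine h.congr_fun fun i => ?_
  rw [intervalIntegral.integral_const_mul, integral_exp_I_intCast_mul]
  split_ifs <;> ring

end trigSeries

lemma hasSum_fiberwise_of_hasSum_ite {E : Type*} [NormedAddCommGroup E] [CompleteSpace E]
    {f : (ℤ × ℤ) × ℤ → E} {s : E}
    (h : HasSum (fun p => if -p.1.1 + p.1.2 + p.2 = 0 then f p else 0) s) :
    HasSum (fun k => ∑' j, f ((j, j - k), k)) s := by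
  have hinj : Function.Injective fun q : ℤ × ℤ => ((q.2, q.2 - q.1), q.1) := by
    intro q q' h
    simp only [Prod.mk.injEq] at h
    exact Prod.ext h.2 h.1.1
  rw [← hinj.hasSum_iff] at h
  · have h' : HasSum (fun q : ℤ × ℤ => f ((q.2, q.2 - q.1), q.1)) s :=
      h.congr_fun fun q => (if_pos (by ring)).symm
    exact h'.prod_fiberwise fun k => (h'.summable.prod_factor k).hasSum
  · intro p hp
    refine if_neg fun hcond => hp ⟨(p.2, p.1.1), ?_⟩
    ext <;> simp
    omega

/-- These are the terms `jacobiTheta₂_term k (-θ₀ / 2π) (it / 2π)` of a Jacobi theta series. -/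
lemma summable_norm_heatKernel_coeff {t : ℝ} (ht : 0 < t) (θ₀ : ℝ) :
    Summable fun k : ℤ => ‖cexp (-(I * k * θ₀) - k ^ 2 * t / 2)‖ := by
  have hτ : 0 < (I * t / (2 * π)).im := by
    rw [show I * t / (2 * π) = ((t / (2 * π) : ℝ) : ℂ) * I by push_cast; ring, mul_I_im, ofReal_re]
    positivity
  refine (summable_norm_iff.mpr ((summable_jacobiTheta₂_term_iff (-θ₀ / (2 * π)) _).mpr hτ)).congr
    fun k => ?_
  rw [jacobiTheta₂_term]
  congr 2
  field_simp
  ring_nf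
  rw [I_sq]
  ring

/-- For absolutely summable Fourier coefficients `(c_m)`, `(d_n)` and
`f(θ) = Σ c_m e^{imθ}`, `g(θ) = Σ d_n e^{inθ}`, one has
`∫_{−π}^{π} conj(f) g ρ_t^{θ₀} dθ = Σ_k (Σ_j conj(c_j) d_{j−k}) e^{−ikθ₀ − k²t/2}`,
where `ρ_t^{θ₀}(θ) = (1/2π) Σ_k e^{ik(θ−θ₀) − k²t/2}` is the heat kernel on the circle. -/
theorem circle_heatKernel_inner_product (c d : ℤ → ℂ)
    (hc : Summable fun m : ℤ => ‖c m‖) (hd : Summable fun m : ℤ => ‖d m‖)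
    (t : ℝ) (ht : 0 < t) (θ₀ : ℝ) :
    ∫ θ in (-π)..π,
        (starRingEnd ℂ) (∑' m : ℤ, c m * Complex.exp (Complex.I * (m : ℂ) * (θ : ℂ))) *
          (∑' m : ℤ, d m * Complex.exp (Complex.I * (m : ℂ) * (θ : ℂ))) *
          ((1 / (2 * (π : ℂ))) * ∑' k : ℤ,
            Complex.exp (Complex.I * (k : ℂ) * ((θ - θ₀ : ℝ) : ℂ) - (k : ℂ) ^ 2 * (t : ℂ) / 2))
      = ∑' k : ℤ, (∑' j : ℤ, (starRingEnd ℂ) (c j) * d (j - k)) *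
          Complex.exp (-(Complex.I * (k : ℂ) * (θ₀ : ℂ)) - (k : ℂ) ^ 2 * (t : ℂ) / 2) := by
  set E : ℤ → ℂ := fun k => cexp (-(I * k * θ₀) - k ^ 2 * t / 2)
  have hE : Summable fun k => ‖E k‖ := summable_norm_heatKernel_coeff ht θ₀
  have hc' : Summable fun j => ‖starRingEnd ℂ (c j)‖ := by simpa only [RCLike.norm_conj] using hc
  have heat : ∀ θ : ℝ, ∑' k : ℤ, cexp (I * k * ((θ - θ₀ : ℝ) : ℂ) - k ^ 2 * t / 2) =
      trigSeries E (fun k => k) θ := fun θ => tsum_congr fun k => by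
    rw [← Complex.exp_add]
    push_cast
    ring_nf
  have integrand : ∀ θ : ℝ,
      starRingEnd ℂ (trigSeries c (fun m => m) θ) * trigSeries d (fun m => m) θ *
        (1 / (2 * π) * ∑' k : ℤ, cexp (I * k * ((θ - θ₀ : ℝ) : ℂ) - k ^ 2 * t / 2)) =
      1 / (2 * π) * trigSeries (fun p : (ℤ × ℤ) × ℤ => starRingEnd ℂ (c p.1.1) * d p.1.2 * E p.2)
        (fun p => -p.1.1 + p.1.2 + p.2) θ := by
    intro θ
    rw [heat, conj_trigSeries, trigSeries_mul hc' hd, mul_left_comm,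
      trigSeries_mul (hc'.mul_norm hd) hE]
  have hsum := hasSum_fiberwise_of_hasSum_ite
    (hasSum_integral_trigSeries ((hc'.mul_norm hd).mul_norm hE) fun p => -p.1.1 + p.1.2 + p.2)
  refine (intervalIntegral.integral_congr fun θ _ => integrand θ).trans ?_
  rw [intervalIntegral.integral_const_mul, ← hsum.tsum_eq, ← tsum_mul_left]
  refine tsum_congr fun k => ?_
  have h2π : (2 * π : ℂ) ≠ 0 := mul_ne_zero two_ne_zero (ofReal_ne_zero.mpr pi_ne_zero)
  rw [tsum_mul_left, ← mul_assoc, one_div_mul_cancel h2π, one_mul]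
  exact tsum_mul_right (f := fun j => starRingEnd ℂ (c j) * d (j - k)) (a := E k)
end

section
/- For every t > 0 and (x₀, y₀) ∈ ℝ², the function ν_t(x, y) = (1/(2π√(2πt))) e^{−(y−y₀)²/(2t)} Σ_{n∈ℤ} e^{in(x−x₀) − n²t/2} (whose defining series converges absolutely for t > 0) satisfies the heat equation ∂ν_t/∂t = (1/2)(∂²ν_t/∂x² + ∂²ν_t/∂y²). -/
/-!
The kernel separates as `ν t x y = g t y * θ t x`, a Gaussian in `(t, y)` times the theta series
`θ t x = ∑ₘ e^{im(x - x₀) - m²t/2}`. Each factor solves a one-dimensional heat equation: the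
Gaussian by direct computation, and `θ` mode by mode, since `∂ₜ` and `½∂ₓ²` both multiply the
`m`-th mode by `-m²/2`. Differentiating `θ` termwise is justified by the summable majorants
`|m|ᵏ e^{-a m²}` (with `a = t/4` for the time derivative, uniformly on `s > t/2`). The product rule
then combines the two one-dimensional equations into the two-dimensional one.
-/

open Real

open Complex in
noncomputable def circleHeatMode (x₀ : ℝ) (m : ℤ) (t x : ℝ) : ℂ :=
  cexp (I * m * ((x - x₀ : ℝ) : ℂ) - (m : ℂ) ^ 2 * (t : ℂ) / 2)

lemma summable_abs_pow_mul_exp_neg_mul_sq {a : ℝ} (ha : 0 < a) (k : ℕ) :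
    Summable fun m : ℤ => |(m : ℝ)| ^ k * rexp (-(a * (m : ℝ) ^ 2)) := by
  refine (summable_pow_mul_jacobiTheta₂_term_bound 0 (div_pos ha pi_pos) k).congr fun m => ?_
  rw [mul_zero, zero_mul, sub_zero, ← mul_assoc, neg_mul, neg_mul, mul_div_cancel₀ _ pi_ne_zero,
    Int.cast_abs]

namespace circleHeatMode

open Complex

variable (x₀ : ℝ) (m : ℤ)

lemma norm_I_mul_pow_mul (k : ℕ) (t x : ℝ) :
    ‖(I * m) ^ k * circleHeatMode x₀ m t x‖ = |(m : ℝ)| ^ k * rexp (-(t / 2 * (m : ℝ) ^ 2)) := by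
  rw [norm_mul, norm_pow, norm_mul, norm_I, one_mul, norm_intCast, circleHeatMode, norm_exp]
  congr 2
  simp [Complex.sub_re, Complex.mul_re, Complex.mul_im,
    ← Complex.ofReal_intCast, ← Complex.ofReal_pow]
  ring

lemma summable_norm_I_mul_pow_mul {t : ℝ} (ht : 0 < t) (k : ℕ) (x : ℝ) :
    Summable fun m : ℤ => ‖(I * m) ^ k * circleHeatMode x₀ m t x‖ := by
  simpa only [norm_I_mul_pow_mul] using summable_abs_pow_mul_exp_neg_mul_sq (half_pos ht) k

lemma hasDerivAt_space (t x : ℝ) :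
    HasDerivAt (circleHeatMode x₀ m t) (I * m * circleHeatMode x₀ m t x) x := by
  have h : HasDerivAt (fun u : ℝ => I * m * ((u - x₀ : ℝ) : ℂ) - (m : ℂ) ^ 2 * (t : ℂ) / 2)
      (I * m) x := by
    simpa using ((((hasDerivAt_id x).sub_const x₀).ofReal_comp).const_mul (I * m)).sub_const
      ((m : ℂ) ^ 2 * (t : ℂ) / 2)
  exact h.cexp.congr_deriv (mul_comm _ _)

lemma hasDerivAt_time (t x : ℝ) :
    HasDerivAt (fun s => circleHeatMode x₀ m s x)
      ((I * m) ^ 2 * circleHeatMode x₀ m t x / 2) t := by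
  have h : HasDerivAt (fun s : ℝ => I * m * ((x - x₀ : ℝ) : ℂ) - (m : ℂ) ^ 2 * (s : ℂ) / 2)
      ((I * m) ^ 2 / 2) t := by
    refine (((((hasDerivAt_id t).ofReal_comp).const_mul ((m : ℂ) ^ 2)).div_const 2).const_sub
      (I * m * ((x - x₀ : ℝ) : ℂ))).congr_deriv ?_
    rw [ofReal_one]
    linear_combination (-(m : ℂ) ^ 2 / 2) * I_sq
  exact h.cexp.congr_deriv (by simp only [circleHeatMode]; ring)

lemma hasDerivAt_tsum_space {t : ℝ} (ht : 0 < t) (k : ℕ) (x : ℝ) :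
    HasDerivAt (fun u => ∑' m : ℤ, (I * m) ^ k * circleHeatMode x₀ m t u)
      (∑' m : ℤ, (I * m) ^ (k + 1) * circleHeatMode x₀ m t x) x :=
  hasDerivAt_tsum (summable_abs_pow_mul_exp_neg_mul_sq (half_pos ht) (k + 1))
    (fun m u => ((hasDerivAt_space x₀ m t u).const_mul ((I * m) ^ k)).congr_deriv (by ring))
    (fun m u => (norm_I_mul_pow_mul x₀ m (k + 1) t u).le)
    (summable_norm_I_mul_pow_mul x₀ ht k x).of_norm x

lemma hasDerivAt_tsum_time {t : ℝ} (ht : 0 < t) (x : ℝ) :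
    HasDerivAt (fun s => ∑' m : ℤ, circleHeatMode x₀ m s x)
      ((∑' m : ℤ, (I * m) ^ 2 * circleHeatMode x₀ m t x) / 2) t := by
  have hbound (m : ℤ) (s : ℝ) (hs : s ∈ Set.Ioi (t / 2)) :
      ‖(I * m) ^ 2 * circleHeatMode x₀ m s x / 2‖ ≤
        |(m : ℝ)| ^ 2 * rexp (-(t / 4 * (m : ℝ) ^ 2)) := by
    have hst : t / 4 * (m : ℝ) ^ 2 ≤ s / 2 * (m : ℝ) ^ 2 :=
      mul_le_mul_of_nonneg_right (by linarith [Set.mem_Ioi.mp hs]) (sq_nonneg _)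
    rw [norm_div, norm_I_mul_pow_mul, Complex.norm_two]
    calc _ ≤ |(m : ℝ)| ^ 2 * rexp (-(s / 2 * (m : ℝ) ^ 2)) := div_le_self (by positivity) one_le_two
      _ ≤ _ := by gcongr
  have hmem : t ∈ Set.Ioi (t / 2) := half_lt_self ht
  have h := hasDerivAt_tsum_of_isPreconnected
    (summable_abs_pow_mul_exp_neg_mul_sq (by positivity : 0 < t / 4) 2) isOpen_Ioi
    isPreconnected_Ioi (fun m s _ => hasDerivAt_time x₀ m s x) hbound hmem
    (by simpa using (summable_norm_I_mul_pow_mul x₀ ht 0 x).of_norm) hmem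
  rwa [tsum_div_const] at h

end circleHeatMode

section Gaussian

variable (y₀ : ℝ)

lemma hasDerivAt_gaussian_space (c t y : ℝ) :
    HasDerivAt (fun v => c * rexp (-(v - y₀) ^ 2 / (2 * t)))
      (c * rexp (-(y - y₀) ^ 2 / (2 * t)) * (-(y - y₀) / t)) y := by
  have h : HasDerivAt (fun v : ℝ => -(v - y₀) ^ 2 / (2 * t)) (-(y - y₀) / t) y := by
    refine (((hasDerivAt_id y).sub_const y₀).pow 2).neg.div_const (2 * t) |>.congr_deriv ?_
    simp only [id, Nat.cast_ofNat]
    ring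
  exact (h.exp.const_mul c).congr_deriv (mul_assoc _ _ _).symm

lemma hasDerivAt_gaussian_space_deriv (c : ℝ) {t : ℝ} (ht : t ≠ 0) (y : ℝ) :
    HasDerivAt (fun v => c * rexp (-(v - y₀) ^ 2 / (2 * t)) * (-(v - y₀) / t))
      (c * rexp (-(y - y₀) ^ 2 / (2 * t)) * ((y - y₀) ^ 2 / t ^ 2 - 1 / t)) y := by
  have h : HasDerivAt (fun v : ℝ => -(v - y₀) / t) (-1 / t) y := by
    simpa using ((hasDerivAt_id y).sub_const y₀).neg.div_const t
  refine ((hasDerivAt_gaussian_space y₀ c t y).mul h).congr_deriv ?_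
  field_simp
  ring

lemma hasDerivAt_gaussian_time {t : ℝ} (ht : 0 < t) (y : ℝ) :
    HasDerivAt (fun s => 1 / (2 * π * √(2 * π * s)) * rexp (-(y - y₀) ^ 2 / (2 * s)))
      (1 / (2 * π * √(2 * π * t)) * rexp (-(y - y₀) ^ 2 / (2 * t)) *
        ((y - y₀) ^ 2 / t ^ 2 - 1 / t) / 2) t := by
  have hpos : 0 < 2 * π * t := by positivity
  have hsqrt : HasDerivAt (fun s => √(2 * π * s)) (π / √(2 * π * t)) t := by
    refine ((hasDerivAt_id t).const_mul (2 * π)).sqrt hpos.ne' |>.congr_deriv ?_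
    simp only [id]
    field_simp
  have hpre : HasDerivAt (fun s => 1 / (2 * π * √(2 * π * s)))
      (-(1 / (2 * π * √(2 * π * t))) / (2 * t)) t := by
    simp only [one_div]
    refine ((hsqrt.const_mul (2 * π)).inv (by positivity)).congr_deriv ?_
    have := Real.sq_sqrt hpos.le
    field_simp
    rw [this]
  have hexp : HasDerivAt (fun s => rexp (-(y - y₀) ^ 2 / (2 * s)))
      (rexp (-(y - y₀) ^ 2 / (2 * t)) * ((y - y₀) ^ 2 / (2 * t ^ 2))) t := by
    refine (((hasDerivAt_id t).const_mul 2).inv (by positivity)).const_mul (-(y - y₀) ^ 2)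
      |>.exp |>.congr_deriv ?_
    simp only [id, Pi.inv_apply]
    field_simp
  refine (hpre.mul hexp).congr_deriv ?_
  field_simp
  ring

end Gaussian

lemma deriv_ofReal_mul_eq_half_laplacian {g : ℝ → ℝ → ℝ} {θ : ℝ → ℝ → ℂ} {g' : ℝ → ℝ}
    {θ' : ℝ → ℂ} {g'' : ℝ} {θ'' : ℂ} {t x y : ℝ}
    (hg' : ∀ v, HasDerivAt (g t) (g' v) v) (hg'' : HasDerivAt g' g'' y)
    (hg : HasDerivAt (fun s => g s y) (g'' / 2) t)
    (hθ' : ∀ u, HasDerivAt (θ t) (θ' u) u) (hθ'' : HasDerivAt θ' θ'' x)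
    (hθ : HasDerivAt (fun s => θ s x) (θ'' / 2) t) :
    deriv (fun s => (g s y : ℂ) * θ s x) t =
      1 / 2 * (deriv (deriv fun x' => (g t y : ℂ) * θ t x') x +
        deriv (deriv fun y' => (g t y' : ℂ) * θ t x) y) := by
  have hx : deriv (fun x' => (g t y : ℂ) * θ t x') = fun u => (g t y : ℂ) * θ' u :=
    funext fun u => ((hθ' u).const_mul _).deriv
  have hy : deriv (fun y' => (g t y' : ℂ) * θ t x) = fun v => (g' v : ℂ) * θ t x :=
    funext fun v => ((hg' v).ofReal_comp.mul_const _).deriv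
  rw [HasDerivAt.deriv (f := fun s => (g s y : ℂ) * θ s x) (hg.ofReal_comp.mul hθ), hx, hy,
    (hθ''.const_mul _).deriv, (hg''.ofReal_comp.mul_const _).deriv]
  push_cast
  ring

/-- The heat kernel on the cylinder `S¹ × ℝ`,
`ν_t(x,y) = (1/(2π√(2πt))) e^{−(y−y₀)²/(2t)} Σ_{n∈ℤ} e^{in(x−x₀) − n²t/2}`, has an
absolutely convergent defining series for `t > 0` and satisfies the heat equation
`∂ν/∂t = (1/2)(∂²ν/∂x² + ∂²ν/∂y²)`. -/
theorem cylinder_heatKernel_heatEquation (x₀ y₀ : ℝ) :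
    let ν : ℝ → ℝ → ℝ → ℂ := fun t x y =>
      ((1 / (2 * π * Real.sqrt (2 * π * t)) * Real.exp (-(y - y₀) ^ 2 / (2 * t)) : ℝ) : ℂ) *
        ∑' m : ℤ, Complex.exp (Complex.I * (m : ℂ) * ((x - x₀ : ℝ) : ℂ) - (m : ℂ) ^ 2 * (t : ℂ) / 2)
    ∀ (t : ℝ), 0 < t → ∀ x y : ℝ,
      (Summable fun m : ℤ =>
        ‖Complex.exp (Complex.I * (m : ℂ) * ((x - x₀ : ℝ) : ℂ) - (m : ℂ) ^ 2 * (t : ℂ) / 2)‖) ∧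
      deriv (fun s : ℝ => ν s x y) t
        = (1 / 2) * (deriv (deriv (fun x' : ℝ => ν t x' y)) x
            + deriv (deriv (fun y' : ℝ => ν t x y')) y) := by
  intro ν t ht x y
  constructor
  · show Summable fun m : ℤ => ‖circleHeatMode x₀ m t x‖
    simpa only [pow_zero, one_mul] using circleHeatMode.summable_norm_I_mul_pow_mul x₀ ht 0 x
  exact deriv_ofReal_mul_eq_half_laplacian
    (g := fun s y => 1 / (2 * π * √(2 * π * s)) * rexp (-(y - y₀) ^ 2 / (2 * s)))
    (θ := fun s x => ∑' m : ℤ, circleHeatMode x₀ m s x)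
    (hasDerivAt_gaussian_space y₀ _ t) (hasDerivAt_gaussian_space_deriv y₀ _ ht.ne' y)
    (hasDerivAt_gaussian_time y₀ ht y)
    (fun u => by
      simpa only [pow_zero, one_mul] using circleHeatMode.hasDerivAt_tsum_space x₀ ht 0 u)
    (circleHeatMode.hasDerivAt_tsum_space x₀ ht 1 x) (circleHeatMode.hasDerivAt_tsum_time x₀ ht x)
end

section
/- Let t > 0 and let φ : ℂ → ℂ be an entire function with ∫_ℂ |φ(w)|² e^{−|w|²/t} dA(w) < ∞, where dA is the Lebesgue (area) measure on ℂ. Then for every z ∈ ℂ, φ(z) = (1/(πt)) ∫_ℂ e^{z·conj(w)/t} φ(w) e^{−|w|²/t} dA(w). -/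
/-!
Substituting `w = z + u` and completing the square, `e^{z w̄/t} e^{-|w|²/t} = e^{-z̄u/t} e^{-|u|²/t}`,
so the integral becomes `∫ ψ(u) e^{-|u|²/t} du` with `ψ(u) = e^{-z̄u/t} φ(z+u)` entire. In polar
coordinates, the mean value property of `ψ` on each circle centred at `0` replaces `ψ` by
`ψ(0) = φ(z)`, and the remaining Gaussian integral is `πt`. The integrand is integrable by
Cauchy–Schwarz against the Gaussian weight, the kernel `e^{z w̄/t}` being itself square integrable.
-/

open Real MeasureTheory Set Complex ComplexConjugate

section Polar

variable {E : Type*} [NormedAddCommGroup E] [NormedSpace ℝ E]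

theorem MeasureTheory.Integrable.integrableOn_comp_polarCoord_symm {f : ℂ → E}
    (hf : Integrable f) :
    IntegrableOn (fun p : ℝ × ℝ => p.1 • f (Complex.polarCoord.symm p)) polarCoord.target := by
  have hf' : Integrable (f ∘ measurableEquivRealProd.symm) :=
    (volume_preserving_equiv_real_prod.symm.integrable_comp_emb
      measurableEquivRealProd.symm.measurableEmbedding).mpr hf
  have h := (integrableOn_image_iff_integrableOn_abs_det_fderiv_smul volume
    polarCoord.open_target.measurableSet
    (fun p _ => (hasFDerivAt_polarCoord_symm p).hasFDerivWithinAt) polarCoord.symm.injOn _).mp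
    hf'.integrableOn
  simp_rw [det_fderivPolarCoordSymm] at h
  exact h.congr_fun (fun p hp => by dsimp only; rw [abs_of_pos hp.1]; rfl)
    polarCoord.open_target.measurableSet

theorem integral_eq_integral_Ioi_smul_circleAverage [CompleteSpace E] {f : ℂ → E}
    (hf : Integrable f) :
    ∫ z, f z = ∫ r in Ioi 0, (2 * π * r) • circleAverage f 0 r := by
  have hpolar := hf.integrableOn_comp_polarCoord_symm
  rw [polarCoord_target, Measure.volume_eq_prod] at hpolar
  rw [← Complex.integral_comp_polarCoord_symm, polarCoord_target, Measure.volume_eq_prod,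
    setIntegral_prod _ hpolar]
  refine setIntegral_congr_fun measurableSet_Ioi fun r _ => ?_
  have hcircle : ∀ θ, Complex.polarCoord.symm (r, θ) = circleMap 0 r θ := fun θ => by
    simp [circleMap, Complex.exp_mul_I]
  simp only [hcircle]
  rw [integral_smul, circleAverage_eq_integral_add (-π),
    intervalIntegral.integral_comp_add_right (fun θ => f (circleMap 0 r θ)), zero_add,
    show 2 * π + -π = π by ring, intervalIntegral.integral_of_le (by linarith [pi_pos]),
    integral_Ioc_eq_integral_Ioo, smul_smul, mul_comm (2 * π), mul_assoc,
    mul_inv_cancel₀ two_pi_pos.ne', mul_one]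

end Polar

theorem Differentiable.integral_comp_norm_smul {E : Type*} [NormedAddCommGroup E]
    [NormedSpace ℂ E] [CompleteSpace E] {ψ : ℂ → E} (hψ : Differentiable ℂ ψ) {g : ℝ → ℂ}
    (hg : Integrable fun u : ℂ => g ‖u‖) (hψg : Integrable fun u : ℂ => g ‖u‖ • ψ u) :
    ∫ u : ℂ, g ‖u‖ • ψ u = (∫ u : ℂ, g ‖u‖) • ψ 0 := by
  rw [integral_eq_integral_Ioi_smul_circleAverage hψg,
    integral_eq_integral_Ioi_smul_circleAverage hg, ← integral_smul_const]
  refine setIntegral_congr_fun measurableSet_Ioi fun r (hr : 0 < r) => ?_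
  have hsphere : ∀ u ∈ Metric.sphere (0 : ℂ) |r|, ‖u‖ = r := fun u hu => by
    rw [mem_sphere_zero_iff_norm.mp hu, abs_of_pos hr]
  have hweight : circleAverage (fun u => g ‖u‖) 0 r = g r := by
    rw [circleAverage_congr_sphere (f₂ := fun _ => g r) fun u hu => by simp only [hsphere u hu],
      circleAverage_const]
  have hmean : circleAverage (fun u => g ‖u‖ • ψ u) 0 r = g r • ψ 0 := by
    rw [circleAverage_congr_sphere (f₂ := fun u => g r • ψ u) fun u hu => by
        simp only [hsphere u hu],
      circleAverage_fun_smul, hψ.diffContOnCl.circleAverage]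
  rw [hmean, hweight, smul_assoc]

theorem integrable_mul_mul_ofReal_of_sq_norm_mul {α : Type*} [MeasurableSpace α]
    {μ : Measure α} {f g : α → ℂ} {w : α → ℝ} (hf : AEStronglyMeasurable f μ)
    (hg : AEStronglyMeasurable g μ) (hw : AEStronglyMeasurable w μ) (hw_nonneg : 0 ≤ w)
    (hfw : Integrable (fun x => ‖f x‖ ^ 2 * w x) μ)
    (hgw : Integrable (fun x => ‖g x‖ ^ 2 * w x) μ) :
    Integrable (fun x => f x * g x * (w x : ℂ)) μ := by
  refine ((hfw.add hgw).div_const 2).mono' ((hf.mul hg).mul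
    (continuous_ofReal.comp_aestronglyMeasurable hw)) (ae_of_all _ fun x => ?_)
  have hwx : 0 ≤ w x := hw_nonneg x
  show ‖f x * g x * (w x : ℂ)‖ ≤ (‖f x‖ ^ 2 * w x + ‖g x‖ ^ 2 * w x) / 2
  rw [norm_mul, norm_mul, norm_real, Real.norm_of_nonneg hwx]
  nlinarith [mul_nonneg (sq_nonneg (‖f x‖ - ‖g x‖)) hwx]

theorem integrable_sq_norm_cexp_mul_conj_div_mul_gaussian {t : ℝ} (ht : 0 < t) (z : ℂ) :
    Integrable fun w : ℂ => ‖cexp (z * conj w / t)‖ ^ 2 * rexp (-‖w‖ ^ 2 / t) := by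
  -- the integrand is `e^{-|w|²/t + 2⟪z, w⟫/t}`, a Gaussian with a linear term
  have h := (GaussianFourier.integrable_cexp_neg_mul_sq_norm_add
    (show 0 < ((1 / t : ℝ) : ℂ).re by simpa using ht) ((2 / t : ℝ) : ℂ) z).norm
  refine h.congr (ae_of_all _ fun w => ?_)
  dsimp only
  rw [real_inner_comm, Complex.inner, ← ofReal_neg, ← ofReal_pow, ← ofReal_mul, ← ofReal_mul,
    ← ofReal_add, norm_exp, norm_exp, ofReal_re, div_ofReal_re, ← Real.exp_nat_mul,
    ← Real.exp_add]
  congr 1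
  push_cast
  ring

theorem integrable_ofReal_gaussian {t : ℝ} (ht : 0 < t) :
    Integrable fun u : ℂ => ((rexp (-‖u‖ ^ 2 / t) : ℝ) : ℂ) := by
  simpa using (integrable_sq_norm_cexp_mul_conj_div_mul_gaussian ht 0).ofReal (𝕜 := ℂ)

theorem integral_ofReal_gaussian {t : ℝ} (ht : 0 < t) :
    ∫ u : ℂ, ((rexp (-‖u‖ ^ 2 / t) : ℝ) : ℂ) = π * t := by
  have h := GaussianFourier.integral_rexp_neg_mul_sq_norm (V := ℂ) (inv_pos.mpr ht)
  rw [finrank_real_complex] at h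
  have hexponent : ∀ u : ℂ, -‖u‖ ^ 2 / t = -t⁻¹ * ‖u‖ ^ 2 := fun u => by ring
  rw [integral_complex_ofReal]
  simp_rw [hexponent, h]
  norm_num

theorem cexp_mul_conj_div_mul_gaussian_add (t : ℝ) (z u : ℂ) :
    cexp (z * conj (z + u) / t) * ((rexp (-‖z + u‖ ^ 2 / t) : ℝ) : ℂ) =
      cexp (-(conj z * u) / t) * ((rexp (-‖u‖ ^ 2 / t) : ℝ) : ℂ) := by
  push_cast
  rw [← mul_conj', ← mul_conj', ← Complex.exp_add, ← Complex.exp_add, map_add]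
  congr 1
  ring

/-- Reproducing property of the Segal–Bargmann space: if `φ` is entire
and square integrable against the Gaussian weight `e^{−|w|²/t}`, then
`φ(z) = (1/(πt)) ∫_ℂ e^{z·conj(w)/t} φ(w) e^{−|w|²/t} dA(w)`. -/
theorem segalBargmann_reproducing (t : ℝ) (ht : 0 < t) (φ : ℂ → ℂ)
    (hφ : Differentiable ℂ φ)
    (hint : Integrable (fun w : ℂ => ‖φ w‖ ^ 2 * Real.exp (-‖w‖ ^ 2 / t))) :
    ∀ z : ℂ, φ z = ((1 / (π * t) : ℝ) : ℂ) *
      ∫ w : ℂ, Complex.exp (z * (starRingEnd ℂ) w / (t : ℂ)) * φ w *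
        ((Real.exp (-‖w‖ ^ 2 / t) : ℝ) : ℂ) := by
  intro z
  set ψ : ℂ → ℂ := fun u => cexp (-(conj z * u) / t) * φ (z + u)
  have hψ : Differentiable ℂ ψ := by fun_prop
  have hkernel : Integrable fun w : ℂ =>
      cexp (z * conj w / t) * φ w * ((rexp (-‖w‖ ^ 2 / t) : ℝ) : ℂ) :=
    integrable_mul_mul_ofReal_of_sq_norm_mul (by fun_prop) hφ.continuous.aestronglyMeasurable
      (by fun_prop) (fun _ => (exp_pos _).le)
      (integrable_sq_norm_cexp_mul_conj_div_mul_gaussian ht z) hint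
  have hshift : ∀ u, cexp (z * conj (z + u) / t) * φ (z + u) *
      ((rexp (-‖z + u‖ ^ 2 / t) : ℝ) : ℂ) = ((rexp (-‖u‖ ^ 2 / t) : ℝ) : ℂ) • ψ u := fun u => by
    rw [mul_right_comm, cexp_mul_conj_div_mul_gaussian_add, smul_eq_mul]
    ring
  have hmean := hψ.integral_comp_norm_smul (g := fun r => ((rexp (-r ^ 2 / t) : ℝ) : ℂ))
    (integrable_ofReal_gaussian ht) ((hkernel.comp_add_left z).congr (ae_of_all _ hshift))
  have hψ0 : ψ 0 = φ z := by simp [ψ]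
  have hπt : ((π * t : ℝ) : ℂ) ≠ 0 := ofReal_ne_zero.mpr (mul_pos pi_pos ht).ne'
  rw [← integral_add_left_eq_self _ z]
  simp_rw [hshift]
  rw [hmean, integral_ofReal_gaussian ht, hψ0, smul_eq_mul, ofReal_div, ofReal_one,
    ← ofReal_mul, one_div, inv_mul_cancel_left₀ hπt]
end

section
/- For every t > 0 and all z, w ∈ ℂ, the Gaussian integral identity (1/(πt)) ∫_ℂ e^{z·conj(v)/t} e^{v·conj(w)/t} e^{−|v|²/t} dA(v) = e^{z·conj(w)/t} holds, where dA is the Lebesgue (area) measure on ℂ. -/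
/-!
Writing `v = x + iy`, the integrand is `exp (-|v|²/t + α v + β v̄)` with `α = w̄/t`, `β = z/t`,
and the exponent is `-(x² + y²)/t + (α + β) x + i(α - β) y`. The Gaussian integral over `ℝ²`
with complex linear term gives `πt · exp (t((α + β)² - (α - β)²)/4) = πt · exp (tαβ)`,
and `tαβ = z w̄ / t`.
-/

open Real MeasureTheory

namespace Complex

theorem integral_cexp_neg_mul_sq_norm_add_re_im {b : ℂ} (hb : 0 < b.re) (c₁ c₂ : ℂ) :
    ∫ v : ℂ, cexp (-b * ‖v‖ ^ 2 + c₁ * v.re + c₂ * v.im) =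
      π / b * cexp ((c₁ ^ 2 + c₂ ^ 2) / (4 * b)) :=
  calc ∫ v : ℂ, cexp (-b * ‖v‖ ^ 2 + c₁ * v.re + c₂ * v.im)
      = ∫ p : Fin 2 → ℝ, cexp (-b * ∑ i, (p i : ℂ) ^ 2 + ∑ i, ![c₁, c₂] i * p i) := by
        rw [← volume_preserving_equiv_pi.symm.integral_comp
          measurableEquivPi.symm.measurableEmbedding]
        congr with p
        simp only [measurableEquivPi_symm_apply, ← ofReal_pow, Complex.sq_norm, normSq_add_mul_I,
          Fin.sum_univ_two]
        push_cast
        simp [add_assoc]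
    _ = π / b * cexp ((c₁ ^ 2 + c₂ ^ 2) / (4 * b)) := by
        rw [GaussianFourier.integral_cexp_neg_mul_sum_add hb]
        norm_num [Fin.sum_univ_two]

theorem integral_cexp_neg_mul_sq_norm_add_mul_add_mul_conj {b : ℂ} (hb : 0 < b.re) (α β : ℂ) :
    ∫ v : ℂ, cexp (-b * ‖v‖ ^ 2 + α * v + β * starRingEnd ℂ v) = π / b * cexp (α * β / b) := by
  have hb₀ : b ≠ 0 := fun h ↦ by simp [h] at hb
  have hlin (v : ℂ) : α * v + β * starRingEnd ℂ v = (α + β) * v.re + I * (α - β) * v.im := by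
    conv_lhs => rw [← re_add_im v]
    simp only [map_add, map_mul, conj_ofReal, conj_I]
    ring
  simp_rw [add_assoc, hlin, ← add_assoc, integral_cexp_neg_mul_sq_norm_add_re_im hb]
  congr 2
  field_simp
  linear_combination (α - β) ^ 2 * I_sq

end Complex

/-- The Gaussian integral identity
`(1/(πt)) ∫_ℂ e^{z·conj(v)/t} e^{v·conj(w)/t} e^{−|v|²/t} dA(v) = e^{z·conj(w)/t}`:
the reproducing kernel of the Segal–Bargmann space reproduces itself. -/
theorem segalBargmann_kernel_self_reproducing (t : ℝ) (ht : 0 < t) (z w : ℂ) :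
    ((1 / (π * t) : ℝ) : ℂ) *
        ∫ v : ℂ, Complex.exp (z * (starRingEnd ℂ) v / (t : ℂ)) *
          Complex.exp (v * (starRingEnd ℂ) w / (t : ℂ)) *
          ((Real.exp (-‖v‖ ^ 2 / t) : ℝ) : ℂ)
      = Complex.exp (z * (starRingEnd ℂ) w / (t : ℂ)) := by
  have ht₀ : (t : ℂ) ≠ 0 := by exact_mod_cast ht.ne'
  have hb : 0 < ((t⁻¹ : ℝ) : ℂ).re := by rw [Complex.ofReal_re]; positivity
  have hintegrand (v : ℂ) :
      Complex.exp (z * (starRingEnd ℂ) v / t) * Complex.exp (v * (starRingEnd ℂ) w / t) *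
          ((Real.exp (-‖v‖ ^ 2 / t) : ℝ) : ℂ) =
        Complex.exp (-((t⁻¹ : ℝ) : ℂ) * ‖v‖ ^ 2 + (starRingEnd ℂ) w / t * v +
          z / t * (starRingEnd ℂ) v) := by
    rw [Complex.ofReal_exp, ← Complex.exp_add, ← Complex.exp_add]
    congr 1
    push_cast
    ring
  simp_rw [hintegrand, Complex.integral_cexp_neg_mul_sq_norm_add_mul_add_mul_conj hb]
  push_cast
  field_simp
end
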